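/- Let f = e^{-varphi} be a geometric log-concave function on R^n and define varphi_A(x) = (50n)^2 varphi^circ(x/n) and f_A = e^{-varphi_A}. Then with R_f = {x : f(x) >= e^{-50n}} and R_{f_A} = {x : f_A(x) >= e^{-50n}}, one has n (R_f)^polar contained in R_{f_A} contained in 2n (R_f)^polar. -/

import Mathlib

open Set
open scoped ENNReal Pointwise

/-- The polar of a set `A ⊆ ℝⁿ`. -/
def polarSet {n : ℕ} (A : Set (EuclideanSpace ℝ (Fin n))) : Set (EuclideanSpace ℝ (Fin n)) :=
  {y | ∀ x ∈ A, (inner ℝ x y : ℝ) ≤ 1}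

/-- The polarity (`𝒜`-transform) of a geometric convex function:
`φ°(x) = sup_y (⟪x,y⟫ - 1)/φ(y)`. -/
noncomputable def Atrans {n : ℕ} (φ : EuclideanSpace ℝ (Fin n) → ℝ≥0∞)
    (x : EuclideanSpace ℝ (Fin n)) : ℝ≥0∞ :=
  ⨆ y : EuclideanSpace ℝ (Fin n), ENNReal.ofReal ((inner ℝ x y : ℝ) - 1) / φ y

/-!
Write `N = 50n`. Since `φ_𝒜 ≤ N` means `φ°(x/n) ≤ 1/N`, the claim is `n` times the
Milman–Rotem inclusions `{φ ≤ N}° ⊆ {φ° ≤ 1/N} ⊆ 2 {φ ≤ N}°`. The right one is immediate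
from the definition of `φ°`. For the left one take `y₀ ∈ {φ ≤ N}°` and `c = ⟪y₀, y⟫ > 1`:
for `s ∈ [0, 1]` with `s c > 1` the point `s y` lies outside `{φ ≤ N}`, so
`N < φ (s y) ≤ s φ y` by convexity and `φ 0 = 0`; the choice `s = min 1 (c - 1)⁻¹` gives
`(c - 1) N ≤ φ y`.
-/

lemma apply_smul_le_of_convex {E : Type*} [AddCommGroup E] [Module ℝ E] {φ : E → ℝ≥0∞}
    (hconv : ∀ x y : E, ∀ a b : ℝ, 0 ≤ a → 0 ≤ b → a + b = 1 →
      φ (a • x + b • y) ≤ ENNReal.ofReal a * φ x + ENNReal.ofReal b * φ y)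
    (h0 : φ 0 = 0) (y : E) {s : ℝ} (hs₀ : 0 ≤ s) (hs₁ : s ≤ 1) :
    φ (s • y) ≤ ENNReal.ofReal s * φ y := by
  simpa [h0] using hconv y 0 s (1 - s) hs₀ (by linarith) (by ring)

lemma ENNReal.pow_two_mul_le_self_iff {r a : ℝ≥0∞} (hr₀ : r ≠ 0) (hr : r ≠ ∞) :
    r ^ 2 * a ≤ r ↔ a ≤ r⁻¹ := by
  rw [ENNReal.mul_le_iff_le_inv (pow_ne_zero 2 hr₀) (ENNReal.pow_ne_top hr), ENNReal.inv_pow,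
    pow_two, mul_assoc, ENNReal.inv_mul_cancel hr₀ hr, mul_one]

section Polarity

variable {n : ℕ} {φ : EuclideanSpace ℝ (Fin n) → ℝ≥0∞} {r : ℝ≥0∞}

lemma Atrans_le_inv_iff (hr₀ : r ≠ 0) (hr : r ≠ ∞) (x : EuclideanSpace ℝ (Fin n)) :
    Atrans φ x ≤ r⁻¹ ↔ ∀ y, r * ENNReal.ofReal (inner ℝ x y - 1) ≤ φ y := by
  refine iSup_le_iff.trans (forall_congr' fun y => ?_)
  rw [ENNReal.div_le_iff_le_mul (Or.inr (ENNReal.inv_ne_top.2 hr₀))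
    (Or.inr (ENNReal.inv_ne_zero.2 hr)), ← ENNReal.mul_le_iff_le_inv hr₀ hr]

lemma mul_ofReal_inner_sub_one_le_of_mem_polarSet
    (hconv : ∀ x y : EuclideanSpace ℝ (Fin n), ∀ a b : ℝ, 0 ≤ a → 0 ≤ b → a + b = 1 →
      φ (a • x + b • y) ≤ ENNReal.ofReal a * φ x + ENNReal.ofReal b * φ y)
    (h0 : φ 0 = 0) {y₀ : EuclideanSpace ℝ (Fin n)} (hy₀ : y₀ ∈ polarSet {x | φ x ≤ r})
    (y : EuclideanSpace ℝ (Fin n)) :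
    r * ENNReal.ofReal (inner ℝ y₀ y - 1) ≤ φ y := by
  set c := inner ℝ y₀ y
  rcases le_or_gt c 1 with hc | hc
  · simp [ENNReal.ofReal_of_nonpos (sub_nonpos.2 hc)]
  have hc₁ : 0 < c - 1 := sub_pos.2 hc
  have lt_apply_smul {s : ℝ} (hs : 1 < s * c) : r < φ (s • y) := by
    by_contra! hle
    have := hy₀ (s • y) hle
    rw [real_inner_smul_left, real_inner_comm] at this
    linarith
  set s := min 1 (c - 1)⁻¹
  have hs₀ : 0 < s := lt_min one_pos (inv_pos.2 hc₁)
  have hsc : 1 < s * c := by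
    rcases min_choice 1 (c - 1)⁻¹ with h | h <;> simp only [s, h]
    · linarith
    · rw [inv_mul_eq_div, one_lt_div hc₁]; linarith
  have hs_mul : (c - 1) * s ≤ 1 :=
    (mul_le_mul_of_nonneg_left (min_le_right _ _) hc₁.le).trans_eq (mul_inv_cancel₀ hc₁.ne')
  calc r * ENNReal.ofReal (c - 1)
      ≤ ENNReal.ofReal s * φ y * ENNReal.ofReal (c - 1) := by
        gcongr
        exact ((lt_apply_smul hsc).trans_le
          (apply_smul_le_of_convex hconv h0 y hs₀.le (min_le_left _ _))).le
    _ = ENNReal.ofReal ((c - 1) * s) * φ y := by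
        rw [ENNReal.ofReal_mul hc₁.le]; ring
    _ ≤ φ y := by
        exact mul_le_of_le_one_left bot_le (ENNReal.ofReal_le_one.2 hs_mul)

lemma polarSet_subset_Atrans_le_inv
    (hconv : ∀ x y : EuclideanSpace ℝ (Fin n), ∀ a b : ℝ, 0 ≤ a → 0 ≤ b → a + b = 1 →
      φ (a • x + b • y) ≤ ENNReal.ofReal a * φ x + ENNReal.ofReal b * φ y)
    (h0 : φ 0 = 0) (hr₀ : r ≠ 0) (hr : r ≠ ∞) :
    polarSet {x | φ x ≤ r} ⊆ {x | Atrans φ x ≤ r⁻¹} := fun _ hy₀ =>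
  (Atrans_le_inv_iff hr₀ hr _).2 (mul_ofReal_inner_sub_one_le_of_mem_polarSet hconv h0 hy₀)

lemma Atrans_le_inv_subset_two_smul_polarSet (hr₀ : r ≠ 0) (hr : r ≠ ∞) :
    {x | Atrans φ x ≤ r⁻¹} ⊆ (2 : ℝ) • polarSet {x | φ x ≤ r} := by
  intro x hx
  rw [mem_smul_set_iff_inv_smul_mem₀ two_ne_zero]
  intro z hz
  rw [mem_ofPred_eq] at hz
  have hle : r * ENNReal.ofReal (inner ℝ x z - 1) ≤ r * 1 :=
    ((Atrans_le_inv_iff hr₀ hr x).1 hx z).trans (hz.trans_eq (mul_one r).symm)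
  have : inner ℝ x z - 1 ≤ 1 :=
    ENNReal.ofReal_le_one.1 ((ENNReal.mul_le_mul_iff_right hr₀ hr).1 hle)
  rw [real_inner_comm, real_inner_smul_left]
  linarith

end Polarity

theorem stmt13_general {n : ℕ} (hn : 1 ≤ n) (φ : EuclideanSpace ℝ (Fin n) → ℝ≥0∞)
    (hconv : ∀ x y : EuclideanSpace ℝ (Fin n), ∀ a b : ℝ, 0 ≤ a → 0 ≤ b → a + b = 1 →
      φ (a • x + b • y) ≤ ENNReal.ofReal a * φ x + ENNReal.ofReal b * φ y)
    (h0 : φ 0 = 0)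
    (φA : EuclideanSpace ℝ (Fin n) → ℝ≥0∞)
    (hφA : ∀ x, φA x = (50 * (n : ℝ≥0∞)) ^ 2 * Atrans φ (((n : ℝ))⁻¹ • x)) :
    (n : ℝ) • polarSet {x | φ x ≤ (50 * (n : ℝ≥0∞))} ⊆ {x | φA x ≤ (50 * (n : ℝ≥0∞))} ∧
    {x | φA x ≤ (50 * (n : ℝ≥0∞))}
      ⊆ (2 * (n : ℝ)) • polarSet {x | φ x ≤ (50 * (n : ℝ≥0∞))} := by
  set N : ℝ≥0∞ := 50 * (n : ℝ≥0∞)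
  have hN₀ : N ≠ 0 := mul_ne_zero (by norm_num) (Nat.cast_ne_zero.2 (by omega))
  have hN : N ≠ ∞ := ENNReal.mul_ne_top (by norm_num) (ENNReal.natCast_ne_top n)
  have hφA_le : {x | φA x ≤ N} = (n : ℝ) • {x | Atrans φ x ≤ N⁻¹} := by
    ext x
    rw [mem_smul_set_iff_inv_smul_mem₀ (by positivity), mem_ofPred_eq, hφA,
      ENNReal.pow_two_mul_le_self_iff hN₀ hN, mem_ofPred_eq]
  rw [hφA_le, mul_comm, ← smul_smul]
  exact ⟨smul_set_mono (polarSet_subset_Atrans_le_inv hconv h0 hN₀ hN),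
    smul_set_mono (Atrans_le_inv_subset_two_smul_polarSet hN₀ hN)⟩

/-- Let `f = e^{-φ}` be a geometric log-concave function, and set
`φ_𝒜(x) = (50n)² φ°(x/n)` and `f_𝒜 = e^{-φ_𝒜}`. With `R_f = {f ≥ e^{-50n}} = {φ ≤ 50n}`
and `R_{f_𝒜} = {f_𝒜 ≥ e^{-50n}} = {φ_𝒜 ≤ 50n}`, one has
`n (R_f)° ⊆ R_{f_𝒜} ⊆ 2n (R_f)°`. -/
theorem stmt13 {n : ℕ} (hn : 1 ≤ n) (φ : EuclideanSpace ℝ (Fin n) → ℝ≥0∞)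
    (hproper : ∃ x, φ x ≠ ⊤)
    (hlsc : LowerSemicontinuous φ)
    (hconv : ∀ x y : EuclideanSpace ℝ (Fin n), ∀ a b : ℝ, 0 ≤ a → 0 ≤ b → a + b = 1 →
      φ (a • x + b • y) ≤ ENNReal.ofReal a * φ x + ENNReal.ofReal b * φ y)
    (h0 : φ 0 = 0)
    (φA : EuclideanSpace ℝ (Fin n) → ℝ≥0∞)
    (hφA : ∀ x, φA x = (50 * (n : ℝ≥0∞)) ^ 2 * Atrans φ (((n : ℝ))⁻¹ • x)) :
    (n : ℝ) • polarSet {x | φ x ≤ (50 * (n : ℝ≥0∞))} ⊆ {x | φA x ≤ (50 * (n : ℝ≥0∞))} ∧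
    {x | φA x ≤ (50 * (n : ℝ≥0∞))}
      ⊆ (2 * (n : ℝ)) • polarSet {x | φ x ≤ (50 * (n : ℝ≥0∞))} :=
  stmt13_general hn φ hconv h0 φA hφA
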